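/- Let ⟨G, Eℓ⟩ be a two-player game graph with live edges and let C = {C_1, …, C_{2k}} be a parity condition, i.e. the sets C_1, …, C_{2k} ⊆ V are pairwise disjoint and their union is V (C_i is the set of vertices of color i). Define Z* := νY_{2k}. μX_{2k−1}. νY_{2k−2}. μX_{2k−3}. ⋯ νY_2. μX_1. ⋃_{i=1}^{k} [ (C_{2i} ∩ Cpre(Y_{2i})) ∪ ((C_1 ∪ ⋯ ∪ C_{2i−1}) ∩ Apre(Y_{2i}, X_{2i−1})) ]. Then Z* equals the winning region W of Player 0 in the fair adversarial game over ⟨G, Eℓ⟩ for the parity winning condition φ = ⋀_{i∈[1;k]} ( □◇C_{2i−1} → ⋁_{j∈[i;k]} □◇C_{2j} ), i.e. the set of plays along which the maximal color visited infinitely often is even. Moreover, there exists a memoryless Player-0 strategy that wins the fair adversarial game for φ from every vertex of Z*. -/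

import Mathlib

/-- Least fixed point of a set transformer (Knaster–Tarski form). -/
def lfpSet {V : Type*} (f : Set V → Set V) : Set V := sInf {X | f X ⊆ X}

/-- Greatest fixed point of a set transformer (Knaster–Tarski form). -/
def gfpSet {V : Type*} (f : Set V → Set V) : Set V := sSup {X | X ⊆ f X}

/-- A two-player game graph with live edges: vertices are partitioned into
Player-0 vertices `V0` and Player-1 vertices `V1`, every vertex has a successor,
and live edges `El` are Player-1 edges. -/
structure LiveGameGraph (V : Type*) where
  V0 : Set V
  V1 : Set V
  E : V → V → Prop
  El : V → V → Prop
  cover : V0 ∪ V1 = Set.univ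
  disj : V0 ∩ V1 = ∅
  succ_nonempty : ∀ v : V, ∃ w, E v w
  live_sub : ∀ v w, El v w → v ∈ V1 ∧ E v w

namespace LiveGameGraph

variable {V : Type*}

/-- Pre∃0(S) -/
def pre0 (Gm : LiveGameGraph V) (S : Set V) : Set V :=
  {v | v ∈ Gm.V0 ∧ ∃ w, Gm.E v w ∧ w ∈ S}

/-- Pre∀1(S) -/
def pre1 (Gm : LiveGameGraph V) (S : Set V) : Set V :=
  {v | v ∈ Gm.V1 ∧ ∀ w, Gm.E v w → w ∈ S}

/-- Cpre(S) -/
def cpre (Gm : LiveGameGraph V) (S : Set V) : Set V := Gm.pre0 S ∪ Gm.pre1 S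

/-- Lpre∃(T) -/
def lpre (Gm : LiveGameGraph V) (T : Set V) : Set V :=
  {v | ∃ w, Gm.El v w ∧ w ∈ T}

/-- Apre(S,T) -/
def apre (Gm : LiveGameGraph V) (S T : Set V) : Set V :=
  Gm.cpre T ∪ (Gm.lpre T ∩ Gm.pre1 S)

end LiveGameGraph

namespace LiveGameGraph

variable {V : Type*}

/-- A play is strongly transition fair if every live edge whose source is visited
infinitely often is itself taken infinitely often. -/
def StronglyFair (Gm : LiveGameGraph V) (π : ℕ → V) : Prop :=
  ∀ v w, Gm.El v w → {i | π i = v}.Infinite → {i | π i = v ∧ π (i + 1) = w}.Infinite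

/-- A Player-0 strategy: given the history (the prefix before the current vertex)
and the current vertex, it chooses an `E`-successor whenever the current vertex
belongs to Player 0. -/
def Strategy0 (Gm : LiveGameGraph V) (ρ : List V → V → V) : Prop :=
  ∀ h v, v ∈ Gm.V0 → Gm.E v (ρ h v)

/-- A Player-1 strategy. -/
def Strategy1 (Gm : LiveGameGraph V) (ρ : List V → V → V) : Prop :=
  ∀ h v, v ∈ Gm.V1 → Gm.E v (ρ h v)

/-- The play compliant with the strategies `ρ0` and `ρ1` starting at `v0`. -/
def Compliant (Gm : LiveGameGraph V) (ρ0 ρ1 : List V → V → V) (v0 : V)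
    (π : ℕ → V) : Prop :=
  π 0 = v0 ∧ ∀ i : ℕ,
    (π i ∈ Gm.V0 → π (i + 1) = ρ0 (List.ofFn fun j : Fin i => π j.1) (π i)) ∧
    (π i ∈ Gm.V1 → π (i + 1) = ρ1 (List.ofFn fun j : Fin i => π j.1) (π i))

/-- Player 0 wins the fair adversarial game for the winning condition `φ`
from `v0` using the strategy `ρ0`. -/
def WinsFrom (Gm : LiveGameGraph V) (φ : (ℕ → V) → Prop)
    (ρ0 : List V → V → V) (v0 : V) : Prop :=
  Gm.Strategy0 ρ0 ∧ ∀ ρ1, Gm.Strategy1 ρ1 → ∀ π, Gm.Compliant ρ0 ρ1 v0 π →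
    (Gm.StronglyFair π → φ π)

/-- The winning region of Player 0 in the fair adversarial game for `φ`. -/
def WinningRegion (Gm : LiveGameGraph V) (φ : (ℕ → V) → Prop) : Set V :=
  {v0 | ∃ ρ0, Gm.WinsFrom φ ρ0 v0}

end LiveGameGraph

namespace LiveGameGraph

variable {V : Type*}

/-- The parity fixpoint νY_{2i}.μX_{2i−1}… peeled off one color pair at a time,
from pair `i` (colors 2i, 2i−1) down to pair 1 (colors 2, 1); `acc` is the union
of the terms for the already-bound pairs (with their bound `Y`/`X` values
substituted in). -/
def parityAux (Gm : LiveGameGraph V) (col : ℕ → Set V) : ℕ → Set V → Set V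
  | 0, acc => acc
  | i + 1, acc =>
      gfpSet fun Y => lfpSet fun X =>
        Gm.parityAux col i
          (acc ∪ ((col (2 * (i + 1)) ∩ Gm.cpre Y) ∪
            ((⋃ j ∈ Finset.Icc 1 (2 * (i + 1) - 1), col j) ∩ Gm.apre Y X)))

/-- The full parity fixpoint Z* = νY_{2k}.μX_{2k−1}. … νY_2.μX_1. ⋃_{i=1}^k
[(C_{2i} ∩ Cpre(Y_{2i})) ∪ ((C_1 ∪ … ∪ C_{2i−1}) ∩ Apre(Y_{2i}, X_{2i−1}))]. -/
def parityZ (Gm : LiveGameGraph V) (col : ℕ → Set V) (k : ℕ) : Set V :=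
  Gm.parityAux col k (∅ : Set V)

end LiveGameGraph

/-!
Both inclusions are proved by induction on the number of colour pairs, peeling off the outermost
`νY. μX.` of `parityAux col (i + 1) acc`; the accumulator `acc` collects the union terms of the
pairs already peeled off.

Player 0 wins on the fixpoint `Z` by following μ-ranks, the index of the first approximant of `μX`
containing the current vertex. Where the union term holds at that rank she moves to a lower rank
(at the top even colour she just stays in `Z`); elsewhere she plays the strategy of the level
below, for the accumulator of that rank. Suppose the top even colour stops occurring, and let `r`
be the least μ-rank that recurs. A vertex of rank `r` satisfying the union term would, by `Apre`,
lead the play below rank `r` infinitely often: through the move of Player 0, through every move of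
Player 1, or by fairness along a live edge. So the play eventually stays at rank `r`, in the game
of the level below.

Player 1 wins outside `Z` by following ν-ranks, the index of the first approximant of `νY`
excluding the current vertex. His strategy never raises the rank and lowers it at the top even
colour `2 * (i + 1)`, so the rank stabilises and that colour stops occurring. If colour `2 * i + 1`
still recurs, Player 0 loses, and Player 1 makes the play fair by serving live edges in round robin
at the vertices that are `Suspected`: those where a colour above `2 * i` has occurred since their
last visit. Otherwise eventually no vertex is suspected, Player 1 plays the strategy of the level
below, and induction applies.
-/

open Filter
open scoped Classical

/-! ### Recurrence along sequences -/

section Sequences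

variable {V : Type*}

theorem Filter.Frequently.eventually_of_imp_succ {P : ℕ → Prop} (hf : ∃ᶠ n in atTop, P n)
    (h : ∀ᶠ n in atTop, P n → P (n + 1)) : ∀ᶠ n in atTop, P n := by
  obtain ⟨N, hN⟩ := eventually_atTop.1 h
  obtain ⟨n₀, hn₀, hP⟩ := frequently_atTop.1 hf N
  refine eventually_atTop.2 ⟨n₀, fun n hn => ?_⟩
  induction n, hn using Nat.le_induction with
  | base => exact hP
  | succ n hn ih => exact hN n (hn₀.trans hn) ih

theorem eventually_frequently_eq [Finite V] (u : ℕ → V) :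
    ∀ᶠ n in atTop, ∃ᶠ m in atTop, u m = u n := by
  have : ∀ᶠ n in atTop, ∀ v, (¬ ∃ᶠ m in atTop, u m = v) → u n ≠ v :=
    eventually_all.2 fun v => by
      by_cases h : ∃ᶠ m in atTop, u m = v
      · exact Eventually.of_forall fun _ h' => absurd h h'
      · exact (not_frequently.1 h).mono fun _ hn _ => hn
  exact this.mono fun n hn => by_contra fun h => hn (u n) h rfl

theorem exists_frequently_eq_eventually_le [Finite V] (u : ℕ → V) (g : V → ℕ) :
    ∃ v, (∃ᶠ n in atTop, u n = v) ∧ ∀ᶠ n in atTop, g v ≤ g (u n) := by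
  set D := {v | ∃ᶠ n in atTop, u n = v}
  have hD : D.Nonempty := let ⟨n, hn⟩ := (eventually_frequently_eq u).exists; ⟨u n, hn⟩
  obtain ⟨v, hv, hmin⟩ := Set.exists_min_image D g D.toFinite hD
  exact ⟨v, hv, (eventually_frequently_eq u).mono fun n hn => hmin (u n) hn⟩

theorem exists_eventually_eq_of_eventually_succ_le {u : ℕ → ℕ}
    (h : ∀ᶠ n in atTop, u (n + 1) ≤ u n) : ∃ m, ∀ᶠ n in atTop, u n = m := by
  obtain ⟨N, hN⟩ := eventually_atTop.1 h
  obtain ⟨n, hn⟩ := WellFoundedLT.antitone_chain_condition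
    (antitone_nat_of_succ_le (f := fun n => u (N + n)) fun n => hN (N + n) (Nat.le_add_right N n))
  refine ⟨u (N + n), eventually_atTop.2 ⟨N + n, fun m hm => ?_⟩⟩
  have := (hn (m - N) (by omega)).symm
  rwa [Nat.add_sub_cancel' (by omega : N ≤ m)] at this

end Sequences

/-! ### Approximants of fixpoints -/

namespace OrderHom

variable {α : Type*} [CompleteLattice α] (f : α →o α)

theorem iterate_bot_le_lfp (n : ℕ) : f^[n] ⊥ ≤ f.lfp := by
  induction n with
  | zero => exact bot_le
  | succ n ih => rw [Function.iterate_succ_apply']; exact (f.mono ih).trans_eq f.map_lfp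

theorem gfp_le_iterate_top (n : ℕ) : f.gfp ≤ f^[n] ⊤ := by
  induction n with
  | zero => exact le_top
  | succ n ih => rw [Function.iterate_succ_apply']; exact f.map_gfp.symm.trans_le (f.mono ih)

theorem exists_iterate_bot_eq_lfp [WellFoundedGT α] : ∃ n, f^[n] ⊥ = f.lfp := by
  obtain ⟨n, hn⟩ := WellFoundedGT.monotone_chain_condition
    ⟨fun n => f^[n] ⊥, Monotone.monotone_iterate_of_le_map f.mono bot_le⟩
  refine ⟨n, (f.iterate_bot_le_lfp n).antisymm (f.lfp_le ?_)⟩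
  rw [← Function.iterate_succ_apply' f]
  exact (hn (n + 1) n.le_succ).ge

theorem exists_iterate_top_eq_gfp [WellFoundedLT α] : ∃ n, f^[n] ⊤ = f.gfp := by
  obtain ⟨n, hn⟩ := WellFoundedLT.antitone_chain_condition
    (Monotone.antitone_iterate_of_map_le f.mono (le_top : f ⊤ ≤ ⊤))
  refine ⟨n, (f.le_gfp ?_).antisymm (f.gfp_le_iterate_top n)⟩
  rw [← Function.iterate_succ_apply' f]
  exact (hn (n + 1) n.le_succ).le

end OrderHom

section SetFixpoints

variable {V : Type*} {f g : Set V → Set V}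

theorem lfpSet_fixed (hf : Monotone f) : f (lfpSet f) = lfpSet f :=
  OrderHom.map_lfp ⟨f, hf⟩

theorem gfpSet_fixed (hf : Monotone f) : f (gfpSet f) = gfpSet f :=
  OrderHom.map_gfp ⟨f, hf⟩

theorem lfpSet_mono (h : ∀ X, f X ⊆ g X) : lfpSet f ⊆ lfpSet g :=
  sInf_le_sInf fun X (hX : g X ⊆ X) => (h X).trans hX

theorem gfpSet_mono (h : ∀ X, f X ⊆ g X) : gfpSet f ⊆ gfpSet g :=
  sSup_le_sSup fun X (hX : X ⊆ f X) => hX.trans (h X)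

theorem iterate_empty_subset_lfpSet (hf : Monotone f) (n : ℕ) : f^[n] ∅ ⊆ lfpSet f :=
  OrderHom.iterate_bot_le_lfp ⟨f, hf⟩ n

theorem gfpSet_subset_iterate_univ (hf : Monotone f) (n : ℕ) : gfpSet f ⊆ f^[n] Set.univ :=
  OrderHom.gfp_le_iterate_top ⟨f, hf⟩ n

theorem exists_iterate_empty_eq_lfpSet [Finite V] (hf : Monotone f) :
    ∃ n, f^[n] ∅ = lfpSet f :=
  OrderHom.exists_iterate_bot_eq_lfp ⟨f, hf⟩

theorem exists_iterate_univ_eq_gfpSet [Finite V] (hf : Monotone f) :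
    ∃ n, f^[n] Set.univ = gfpSet f :=
  OrderHom.exists_iterate_top_eq_gfp ⟨f, hf⟩

end SetFixpoints

/-! ### The parity fixpoint -/

namespace LiveGameGraph

variable {V : Type*} (Gm : LiveGameGraph V)

theorem notMem_V1 {v : V} (h : v ∈ Gm.V0) : v ∉ Gm.V1 := fun h1 =>
  (Set.eq_empty_iff_forall_notMem.1 Gm.disj) v ⟨h, h1⟩

theorem mem_V0_or_V1 (v : V) : v ∈ Gm.V0 ∨ v ∈ Gm.V1 :=
  Gm.cover.symm.subset (Set.mem_univ v)

theorem notMem_V0 {v : V} (h : v ∈ Gm.V1) : v ∉ Gm.V0 := fun h0 => Gm.notMem_V1 h0 h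

theorem mem_cpre_of_V0 {v : V} {S : Set V} (hv : v ∈ Gm.V0) :
    v ∈ Gm.cpre S ↔ ∃ w, Gm.E v w ∧ w ∈ S :=
  ⟨fun h => h.elim (·.2) fun h1 => absurd h1.1 (Gm.notMem_V1 hv), fun h => Or.inl ⟨hv, h⟩⟩

theorem mem_cpre_of_V1 {v : V} {S : Set V} (hv : v ∈ Gm.V1) :
    v ∈ Gm.cpre S ↔ ∀ w, Gm.E v w → w ∈ S :=
  ⟨fun h => h.elim (fun h0 => absurd hv (Gm.notMem_V1 h0.1)) (·.2),
    fun h => Or.inr ⟨hv, h⟩⟩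

theorem exists_notMem_of_notMem_cpre {v : V} {S : Set V} (hv : v ∈ Gm.V1)
    (h : v ∉ Gm.cpre S) : ∃ w, Gm.E v w ∧ w ∉ S := by
  by_contra! hall
  exact h ((Gm.mem_cpre_of_V1 hv).2 hall)

theorem pre0_mono {S T : Set V} (h : S ⊆ T) : Gm.pre0 S ⊆ Gm.pre0 T :=
  fun _ ⟨hv, w, hw, hwS⟩ => ⟨hv, w, hw, h hwS⟩

theorem pre1_mono {S T : Set V} (h : S ⊆ T) : Gm.pre1 S ⊆ Gm.pre1 T :=
  fun _ ⟨hv, hall⟩ => ⟨hv, fun w hw => h (hall w hw)⟩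

theorem cpre_mono {S T : Set V} (h : S ⊆ T) : Gm.cpre S ⊆ Gm.cpre T :=
  Set.union_subset_union (Gm.pre0_mono h) (Gm.pre1_mono h)

theorem lpre_mono {S T : Set V} (h : S ⊆ T) : Gm.lpre S ⊆ Gm.lpre T :=
  fun _ ⟨w, hw, hwS⟩ => ⟨w, hw, h hwS⟩

theorem apre_mono {S S' T T' : Set V} (hS : S ⊆ S') (hT : T ⊆ T') :
    Gm.apre S T ⊆ Gm.apre S' T' :=
  Set.union_subset_union (Gm.cpre_mono hT)
    (Set.inter_subset_inter (Gm.lpre_mono hT) (Gm.pre1_mono hS))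

theorem cpre_subset_apre {S T : Set V} : Gm.cpre T ⊆ Gm.apre S T := Set.subset_union_left

theorem apre_subset_cpre {S T : Set V} (h : T ⊆ S) : Gm.apre S T ⊆ Gm.cpre S :=
  Set.union_subset (Gm.cpre_mono h) (Set.inter_subset_right.trans Set.subset_union_right)

theorem mem_of_mem_cpre {σ : V → V} {S : Set V} {v w : V} (hv : v ∈ Gm.cpre S)
    (hσ : v ∈ Gm.V0 → σ v ∈ S) (hE : Gm.E v w) (hw : v ∈ Gm.V0 → w = σ v) :
    w ∈ S := by
  rcases Gm.mem_V0_or_V1 v with h0 | h1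
  · exact hw h0 ▸ hσ h0
  · exact (Gm.mem_cpre_of_V1 h1).1 hv w hE

variable (col : ℕ → Set V)

def lowColors (i : ℕ) : Set V := ⋃ c ∈ Finset.Icc 1 (2 * i), col c

def parityTerm (j : ℕ) (Y X : Set V) : Set V :=
  (col (2 * j) ∩ Gm.cpre Y) ∪ ((⋃ c ∈ Finset.Icc 1 (2 * j - 1), col c) ∩ Gm.apre Y X)

theorem lowColors_zero : lowColors col 0 = (∅ : Set V) := by
  simp [lowColors]

theorem biUnion_Icc_succ (n : ℕ) :
    (⋃ c ∈ Finset.Icc 1 (n + 1), col c) =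
      (⋃ c ∈ Finset.Icc 1 n, col c) ∪ col (n + 1) := by
  rw [show Finset.Icc 1 (n + 1) = insert (n + 1) (Finset.Icc 1 n) by ext; simp; omega,
    Finset.set_biUnion_insert, Set.union_comm]

theorem biUnion_col_odd_eq (i : ℕ) :
    (⋃ c ∈ Finset.Icc 1 (2 * (i + 1) - 1), col c) = lowColors col i ∪ col (2 * i + 1) := by
  rw [show 2 * (i + 1) - 1 = 2 * i + 1 by omega]
  exact biUnion_Icc_succ col (2 * i)

theorem lowColors_succ (i : ℕ) :
    lowColors col (i + 1) = lowColors col i ∪ col (2 * i + 1) ∪ col (2 * (i + 1)) := by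
  show (⋃ c ∈ Finset.Icc 1 (2 * i + 1 + 1), col c) = _
  rw [biUnion_Icc_succ, biUnion_Icc_succ]
  rfl

theorem mem_lowColors_or_of_notMem_col {i : ℕ} {v : V} (hv : v ∈ lowColors col (i + 1))
    (htop : v ∉ col (2 * (i + 1))) : v ∈ lowColors col i ∪ col (2 * i + 1) := by
  rw [lowColors_succ] at hv
  exact hv.resolve_right htop

theorem lowColors_mono : Monotone (lowColors col) := by
  refine monotone_nat_of_le_succ fun i => ?_
  rw [lowColors_succ]
  exact Set.subset_union_left.trans Set.subset_union_left

theorem parityTerm_mono {j : ℕ} {Y Y' X X' : Set V} (hY : Y ⊆ Y') (hX : X ⊆ X') :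
    Gm.parityTerm col j Y X ⊆ Gm.parityTerm col j Y' X' :=
  Set.union_subset_union (Set.inter_subset_inter_right _ (Gm.cpre_mono hY))
    (Set.inter_subset_inter_right _ (Gm.apre_mono hY hX))

theorem parityTerm_subset_cpre {j : ℕ} {Y X : Set V} (h : X ⊆ Y) :
    Gm.parityTerm col j Y X ⊆ Gm.cpre Y :=
  Set.union_subset Set.inter_subset_right (Set.inter_subset_right.trans (Gm.apre_subset_cpre h))

theorem parityTerm_subset_lowColors (i : ℕ) (Y X : Set V) :
    Gm.parityTerm col (i + 1) Y X ⊆ lowColors col (i + 1) := by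
  rw [lowColors_succ, ← biUnion_col_odd_eq]
  exact Set.union_subset_union Set.inter_subset_left Set.inter_subset_left |>.trans
    (Set.union_comm _ _).le

theorem parityAux_succ (i : ℕ) (acc : Set V) :
    Gm.parityAux col (i + 1) acc =
      gfpSet fun Y => lfpSet fun X => Gm.parityAux col i (acc ∪ Gm.parityTerm col (i + 1) Y X) :=
  rfl

theorem parityAux_mono (i : ℕ) : Monotone (Gm.parityAux col i) := by
  induction i with
  | zero => exact monotone_id
  | succ i ih =>
    intro a b h
    exact gfpSet_mono fun Y => lfpSet_mono fun X => ih (Set.union_subset_union_left _ h)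

theorem parityAux_inner_mono (i : ℕ) (acc Y : Set V) :
    Monotone fun X => Gm.parityAux col i (acc ∪ Gm.parityTerm col (i + 1) Y X) :=
  fun _ _ h => Gm.parityAux_mono col i
    (Set.union_subset_union_right _ (Gm.parityTerm_mono col subset_rfl h))

theorem parityAux_outer_mono (i : ℕ) (acc : Set V) :
    Monotone fun Y => lfpSet fun X => Gm.parityAux col i (acc ∪ Gm.parityTerm col (i + 1) Y X) :=
  fun _ _ h => lfpSet_mono fun _ => Gm.parityAux_mono col i
    (Set.union_subset_union_right _ (Gm.parityTerm_mono col h subset_rfl))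

theorem parityAux_succ_eq_lfpSet (i : ℕ) (acc : Set V) :
    Gm.parityAux col (i + 1) acc =
      lfpSet fun X => Gm.parityAux col i
        (acc ∪ Gm.parityTerm col (i + 1) (Gm.parityAux col (i + 1) acc) X) :=
  (gfpSet_fixed (Gm.parityAux_outer_mono col i acc)).symm

theorem parityAux_succ_fixed (i : ℕ) (acc : Set V) :
    Gm.parityAux col i (acc ∪ Gm.parityTerm col (i + 1)
      (Gm.parityAux col (i + 1) acc) (Gm.parityAux col (i + 1) acc)) =
      Gm.parityAux col (i + 1) acc := by
  conv_rhs => rw [parityAux_succ_eq_lfpSet]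
  rw [← lfpSet_fixed (Gm.parityAux_inner_mono col i acc _), ← parityAux_succ_eq_lfpSet]

theorem subset_parityAux (i : ℕ) (acc : Set V) : acc ⊆ Gm.parityAux col i acc := by
  induction i generalizing acc with
  | zero => exact subset_rfl
  | succ i ih => exact Gm.parityAux_succ_fixed col i acc ▸ Set.subset_union_left.trans (ih _)

theorem parityAux_subset (i : ℕ) (acc : Set V) :
    Gm.parityAux col i acc ⊆ acc ∪ lowColors col i := by
  induction i generalizing acc with
  | zero => exact Set.subset_union_left
  | succ i ih =>
    rw [← parityAux_succ_fixed]
    refine (ih _).trans (Set.union_subset (Set.union_subset_union_right _ ?_) ?_)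
    · exact Gm.parityTerm_subset_lowColors col i _ _
    · exact (lowColors_mono col i.le_succ).trans Set.subset_union_right

theorem lowColors_inter_cpre_subset (i : ℕ) (acc : Set V) :
    lowColors col i ∩ Gm.cpre (Gm.parityAux col i acc) ⊆ Gm.parityAux col i acc := by
  induction i generalizing acc with
  | zero => simp [lowColors_zero]
  | succ i ih =>
    set Z := Gm.parityAux col (i + 1) acc
    have hZ : Gm.parityAux col i (acc ∪ Gm.parityTerm col (i + 1) Z Z) = Z :=
      Gm.parityAux_succ_fixed col i acc
    have hT : Gm.parityTerm col (i + 1) Z Z ⊆ Z := fun v hv =>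
      hZ ▸ Gm.subset_parityAux col i _ (Or.inr hv)
    rintro v ⟨hvc, hvZ⟩
    rw [lowColors_succ] at hvc
    rcases hvc with (hlow | hodd) | heven
    · exact hZ ▸ ih _ ⟨hlow, hZ.symm ▸ hvZ⟩
    · refine hT (Or.inr ⟨?_, Gm.cpre_subset_apre hvZ⟩)
      rw [biUnion_col_odd_eq]
      exact Or.inr hodd
    · exact hT (Or.inl ⟨heven, hvZ⟩)

end LiveGameGraph

namespace LiveGameGraph

variable {V : Type*} (Gm : LiveGameGraph V) (col : ℕ → Set V) (k : ℕ)

theorem stronglyFair_iff {π : ℕ → V} : Gm.StronglyFair π ↔ ∀ v w, Gm.El v w →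
    (∃ᶠ n in atTop, π n = v) → ∃ᶠ n in atTop, π n = v ∧ π (n + 1) = w := by
  simp only [StronglyFair, Nat.frequently_atTop_iff_infinite]

def ColorsDisjoint : Prop :=
  ∀ i ∈ Finset.Icc 1 (2 * k), ∀ j ∈ Finset.Icc 1 (2 * k), i ≠ j → col i ∩ col j = ∅

def parityCondition (π : ℕ → V) : Prop :=
  ∀ i ∈ Finset.Icc 1 k, (∃ᶠ n in atTop, π n ∈ col (2 * i - 1)) →
    ∃ j ∈ Finset.Icc i k, ∃ᶠ n in atTop, π n ∈ col (2 * j)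

variable {col k}

theorem le_of_frequently_mem_col (hdisj : ColorsDisjoint col k) {π : ℕ → V} {j c : ℕ}
    (hj : j ≤ k) (hc : c ∈ Finset.Icc 1 (2 * k))
    (hlow : ∀ᶠ n in atTop, π n ∈ lowColors col j)
    (hfreq : ∃ᶠ n in atTop, π n ∈ col c) : c ≤ 2 * j := by
  obtain ⟨n, hnc, hnlow⟩ := (hfreq.and_eventually hlow).exists
  simp only [lowColors, Set.mem_iUnion, Finset.mem_Icc, exists_prop] at hnlow
  obtain ⟨c', hc', hnc'⟩ := hnlow
  by_contra hlt
  have hempty := hdisj c hc c' (Finset.mem_Icc.2 ⟨hc'.1, by omega⟩) (by omega)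
  exact hempty.subset ⟨hnc, hnc'⟩

theorem parityCondition_of_frequently_mem_col (hdisj : ColorsDisjoint col k) {π : ℕ → V}
    {j : ℕ} (hj : j ≤ k) (hlow : ∀ᶠ n in atTop, π n ∈ lowColors col j)
    (heven : ∃ᶠ n in atTop, π n ∈ col (2 * j)) : parityCondition col k π := by
  intro t ht hodd
  simp only [Finset.mem_Icc] at ht
  have := le_of_frequently_mem_col hdisj hj (Finset.mem_Icc.2 ⟨by omega, by omega⟩) hlow hodd
  exact ⟨j, Finset.mem_Icc.2 ⟨by omega, hj⟩, heven⟩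

theorem not_parityCondition_of_frequently_mem_col (hdisj : ColorsDisjoint col k) {π : ℕ → V}
    {j : ℕ} (hj : j ∈ Finset.Icc 1 k) (hlow : ∀ᶠ n in atTop, π n ∈ lowColors col j)
    (hodd : ∃ᶠ n in atTop, π n ∈ col (2 * j - 1))
    (heven : ∀ᶠ n in atTop, π n ∉ col (2 * j)) :
    ¬ parityCondition col k π := by
  intro h
  obtain ⟨s, hs, hfreq⟩ := h j hj hodd
  simp only [Finset.mem_Icc] at hj hs
  have := le_of_frequently_mem_col hdisj hj.2 (Finset.mem_Icc.2 ⟨by omega, by omega⟩) hlow hfreq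
  obtain rfl : s = j := by omega
  exact (hfreq.and_eventually heven).exists.elim fun _ h => h.2 h.1

end LiveGameGraph

/-! ### Player 0 wins on the fixpoint -/

namespace LiveGameGraph

variable {V : Type*} (Gm : LiveGameGraph V) (col : ℕ → Set V)

noncomputable def pick (v : V) (S : Set V) : V :=
  if h : ∃ w, Gm.E v w ∧ w ∈ S then h.choose else (Gm.succ_nonempty v).choose

theorem E_pick (v : V) (S : Set V) : Gm.E v (Gm.pick v S) := by
  unfold pick
  split_ifs with h
  exacts [h.choose_spec.1, (Gm.succ_nonempty v).choose_spec]

theorem pick_mem {v : V} {S : Set V} (h : ∃ w, Gm.E v w ∧ w ∈ S) : Gm.pick v S ∈ S := by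
  rw [pick, dif_pos h]
  exact h.choose_spec.2

variable {Gm} in
theorem frequently_succ_mem_of_mem_apre {π : ℕ → V} (hE : ∀ n, Gm.E (π n) (π (n + 1)))
    (hfair : Gm.StronglyFair π) {v : V} {S T : Set V} (hv : v ∈ Gm.apre S T)
    (hfreq : ∃ᶠ n in atTop, π n = v)
    (h0 : v ∈ Gm.V0 → ∀ᶠ n in atTop, π n = v → π (n + 1) ∈ T) :
    ∃ᶠ n in atTop, π (n + 1) ∈ T := by
  rcases hv with hc | ⟨⟨u, hu, huT⟩, -⟩
  · rcases Gm.mem_V0_or_V1 v with hv0 | hv1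
    · exact (hfreq.and_eventually (h0 hv0)).mono fun n h => h.2 h.1
    · exact hfreq.mono fun n hn => (Gm.mem_cpre_of_V1 hv1).1 hc _ (hn ▸ hE n)
  · exact (Gm.stronglyFair_iff.1 hfair v u hu hfreq).mono fun n h => h.2 ▸ huT

def muStage (i : ℕ) (acc : Set V) (n : ℕ) : Set V :=
  (fun X => Gm.parityAux col i
    (acc ∪ Gm.parityTerm col (i + 1) (Gm.parityAux col (i + 1) acc) X))^[n] ∅

def muAcc (i : ℕ) (acc : Set V) (n : ℕ) : Set V :=
  acc ∪ Gm.parityTerm col (i + 1) (Gm.parityAux col (i + 1) acc) (Gm.muStage col i acc n)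

/-- For `v` in the fixpoint, `v ∈ muStage (muRank v + 1) = parityAux i (muAcc (muRank v))`. -/
noncomputable def muRank (i : ℕ) (acc : Set V) (v : V) : ℕ :=
  sInf {n | v ∈ Gm.muStage col i acc (n + 1)}

variable {col}

theorem muStage_succ (i : ℕ) (acc : Set V) (n : ℕ) :
    Gm.muStage col i acc (n + 1) = Gm.parityAux col i (Gm.muAcc col i acc n) :=
  Function.iterate_succ_apply' _ n ∅

theorem muStage_subset (i : ℕ) (acc : Set V) (n : ℕ) :
    Gm.muStage col i acc n ⊆ Gm.parityAux col (i + 1) acc := by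
  rw [parityAux_succ_eq_lfpSet]
  exact iterate_empty_subset_lfpSet (Gm.parityAux_inner_mono col i acc _) n

theorem exists_mem_muStage [Finite V] {i : ℕ} {acc : Set V} {v : V}
    (hv : v ∈ Gm.parityAux col (i + 1) acc) : ∃ n, v ∈ Gm.muStage col i acc (n + 1) := by
  obtain ⟨n, hn⟩ := exists_iterate_empty_eq_lfpSet (Gm.parityAux_inner_mono col i acc _)
  rw [← parityAux_succ_eq_lfpSet] at hn
  have hvn : v ∈ Gm.muStage col i acc n := by rw [muStage, hn]; exact hv
  cases n with
  | zero => exact absurd hvn (Set.notMem_empty v)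
  | succ n => exact ⟨n, hvn⟩

theorem mem_parityAux_muAcc [Finite V] {i : ℕ} {acc : Set V} {v : V}
    (hv : v ∈ Gm.parityAux col (i + 1) acc) :
    v ∈ Gm.parityAux col i (Gm.muAcc col i acc (Gm.muRank col i acc v)) :=
  Gm.muStage_succ i acc _ ▸ Nat.sInf_mem (Gm.exists_mem_muStage hv)

theorem muRank_le {i n : ℕ} {acc : Set V} {v : V} (h : v ∈ Gm.muStage col i acc (n + 1)) :
    Gm.muRank col i acc v ≤ n :=
  Nat.sInf_le h

theorem muRank_lt {i n : ℕ} {acc : Set V} {v : V} (h : v ∈ Gm.muStage col i acc n) :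
    Gm.muRank col i acc v < n := by
  cases n with
  | zero => exact absurd h (Set.notMem_empty v)
  | succ n => exact Nat.lt_succ_of_le (Gm.muRank_le h)

variable (col)

noncomputable def parityStrategy : ℕ → Set V → V → V
  | 0, _, v => Gm.pick v Set.univ
  | i + 1, acc, v =>
    if v ∈ Gm.muAcc col i acc (Gm.muRank col i acc v) then
      if ∃ w, Gm.E v w ∧ w ∈ Gm.muStage col i acc (Gm.muRank col i acc v) then
        Gm.pick v (Gm.muStage col i acc (Gm.muRank col i acc v))
      else Gm.pick v (Gm.parityAux col (i + 1) acc)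
    else parityStrategy i (Gm.muAcc col i acc (Gm.muRank col i acc v)) v

variable {col}

theorem E_parityStrategy (i : ℕ) (acc : Set V) (v : V) :
    Gm.E v (Gm.parityStrategy col i acc v) := by
  induction i generalizing acc with
  | zero => exact Gm.E_pick v _
  | succ i ih =>
    simp only [parityStrategy]
    split_ifs
    exacts [Gm.E_pick v _, Gm.E_pick v _, ih _]

theorem parityStrategy_succ_of_notMem {i : ℕ} {acc : Set V} {v : V}
    (h : v ∉ Gm.muAcc col i acc (Gm.muRank col i acc v)) :
    Gm.parityStrategy col (i + 1) acc v =
      Gm.parityStrategy col i (Gm.muAcc col i acc (Gm.muRank col i acc v)) v := by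
  simp only [parityStrategy, if_neg h]

theorem parityStrategy_succ_mem {i : ℕ} {acc : Set V} {v : V}
    (hA : v ∈ Gm.muAcc col i acc (Gm.muRank col i acc v)) (hv0 : v ∈ Gm.V0)
    (hcpre : v ∈ Gm.cpre (Gm.parityAux col (i + 1) acc)) :
    Gm.parityStrategy col (i + 1) acc v ∈ Gm.parityAux col (i + 1) acc := by
  simp only [parityStrategy, if_pos hA]
  split_ifs with hex
  · exact Gm.muStage_subset i acc _ (Gm.pick_mem hex)
  · exact Gm.pick_mem ((Gm.mem_cpre_of_V0 hv0).1 hcpre)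

theorem parityStrategy_succ_mem_muStage {i : ℕ} {acc : Set V} {v : V}
    (hA : v ∈ Gm.muAcc col i acc (Gm.muRank col i acc v))
    (h : ∃ w, Gm.E v w ∧ w ∈ Gm.muStage col i acc (Gm.muRank col i acc v)) :
    Gm.parityStrategy col (i + 1) acc v ∈ Gm.muStage col i acc (Gm.muRank col i acc v) := by
  simp only [parityStrategy, if_pos hA, if_pos h]
  exact Gm.pick_mem h

theorem parityStrategy_step [Finite V] {i : ℕ} {acc : Set V} {v w : V}
    (hv : v ∈ Gm.parityAux col i acc) (hvacc : v ∉ acc) (hE : Gm.E v w)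
    (hw : v ∈ Gm.V0 → w = Gm.parityStrategy col i acc v) : w ∈ Gm.parityAux col i acc := by
  induction i generalizing acc with
  | zero => exact absurd hv hvacc
  | succ i ih =>
    by_cases hA : v ∈ Gm.muAcc col i acc (Gm.muRank col i acc v)
    · have hcpre := Gm.parityTerm_subset_cpre col (Gm.muStage_subset i acc _)
        (hA.resolve_left hvacc)
      exact Gm.mem_of_mem_cpre hcpre (Gm.parityStrategy_succ_mem hA · hcpre) hE hw
    · rw [Gm.parityStrategy_succ_of_notMem hA] at hw
      exact Gm.muStage_subset i acc _
        (Gm.muStage_succ i acc _ ▸ ih (Gm.mem_parityAux_muAcc hv) hA hw)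

variable {Gm}

section PlayerZero

variable {i : ℕ} {acc : Set V} {π : ℕ → V} (hE : ∀ n, Gm.E (π n) (π (n + 1)))
  (hfair : Gm.StronglyFair π)
  (hin : ∀ᶠ n in atTop, π n ∈ Gm.parityAux col (i + 1) acc \ acc)
  (hσ : ∀ᶠ n in atTop, π n ∈ Gm.V0 →
    π (n + 1) = Gm.parityStrategy col (i + 1) acc (π n))
  (htop : ∀ᶠ n in atTop, π n ∉ col (2 * (i + 1)))
include hE hfair hin hσ htop

/-- If `v` satisfied the union term at rank `r`, Player 0, Player 1 or fairness would lead the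
play infinitely often below rank `r`. -/
theorem notMem_muAcc_of_frequently {r : ℕ}
    (hle : ∀ᶠ n in atTop, r ≤ Gm.muRank col i acc (π n)) {v : V}
    (hfreq : ∃ᶠ n in atTop, π n = v) (hr : Gm.muRank col i acc v = r) :
    v ∉ Gm.muAcc col i acc r := by
  intro hvA
  subst hr
  obtain ⟨n, rfl, hn, hncol⟩ := (hfreq.and_eventually (hin.and htop)).exists
  have hapre := ((hvA.resolve_left hn.2).resolve_left fun h => hncol h.1).2
  have hdrop := frequently_succ_mem_of_mem_apre hE hfair hapre hfreq fun hv0 =>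
    hσ.mono fun m hσm hm => by
      rw [hσm (hm ▸ hv0), hm]
      refine Gm.parityStrategy_succ_mem_muStage hvA ?_
      exact hapre.elim (Gm.mem_cpre_of_V0 hv0).1 fun h => absurd h.2.1 (Gm.notMem_V1 hv0)
  obtain ⟨m, hm, hrank⟩ :=
    (hdrop.and_eventually ((tendsto_add_atTop_nat 1).eventually hle)).exists
  exact (Gm.muRank_lt hm).not_ge hrank

/-- The witness is the accumulator at the least μ-rank that recurs. -/
theorem exists_eventually_parityStrategy [Finite V] : ∃ acc',
    (∀ᶠ n in atTop, π n ∈ Gm.parityAux col i acc' \ acc') ∧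
    ∀ᶠ n in atTop, π n ∈ Gm.V0 → π (n + 1) = Gm.parityStrategy col i acc' (π n) := by
  obtain ⟨v₀, hfreq, hle⟩ := exists_frequently_eq_eventually_le π (Gm.muRank col i acc)
  set r := Gm.muRank col i acc v₀
  have hA : ∀ᶠ n in atTop, Gm.muRank col i acc (π n) = r → π n ∉ Gm.muAcc col i acc r :=
    (eventually_frequently_eq π).mono fun n hn =>
      notMem_muAcc_of_frequently hE hfair hin hσ htop hle hn
  have hstay :
      ∀ᶠ n in atTop, Gm.muRank col i acc (π n) = r ∧ π n ∉ Gm.muAcc col i acc r := by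
    refine Frequently.eventually_of_imp_succ ((hfreq.and_eventually hA).mono fun n h => ?_) ?_
    · exact ⟨h.1 ▸ rfl, h.2 (h.1 ▸ rfl)⟩
    filter_upwards [hin, hσ, (tendsto_add_atTop_nat 1).eventually hle,
      (tendsto_add_atTop_nat 1).eventually hA] with n hn hσn hle' hA' hP
    have hmem := hP.1 ▸ Gm.mem_parityAux_muAcc hn.1
    have hnext : π (n + 1) ∈ Gm.parityAux col i (Gm.muAcc col i acc r) := by
      refine Gm.parityStrategy_step hmem hP.2 (hE n) fun hv0 => ?_
      rw [hσn hv0, Gm.parityStrategy_succ_of_notMem (hP.1 ▸ hP.2), hP.1]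
    have hrank := (Gm.muRank_le (Gm.muStage_succ i acc r ▸ hnext)).antisymm hle'
    exact ⟨hrank, hA' hrank⟩
  refine ⟨Gm.muAcc col i acc r, ?_, ?_⟩
  · filter_upwards [hin, hstay] with n hn hP
    exact ⟨hP.1 ▸ Gm.mem_parityAux_muAcc hn.1, hP.2⟩
  · filter_upwards [hσ, hstay] with n hσn hP hv0
    rw [hσn hv0, Gm.parityStrategy_succ_of_notMem (hP.1 ▸ hP.2), hP.1]

end PlayerZero

theorem parityCondition_of_parityStrategy [Finite V] {k : ℕ} (hdisj : ColorsDisjoint col k)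
    {i : ℕ} (hi : i ≤ k) {acc : Set V} {π : ℕ → V} (hE : ∀ n, Gm.E (π n) (π (n + 1)))
    (hfair : Gm.StronglyFair π) (hin : ∀ᶠ n in atTop, π n ∈ Gm.parityAux col i acc \ acc)
    (hσ : ∀ᶠ n in atTop, π n ∈ Gm.V0 → π (n + 1) = Gm.parityStrategy col i acc (π n)) :
    parityCondition col k π := by
  induction i generalizing acc with
  | zero => exact hin.exists.elim fun n h => absurd h.1 h.2
  | succ i ih =>
    have hlow : ∀ᶠ n in atTop, π n ∈ lowColors col (i + 1) :=
      hin.mono fun n h => (Gm.parityAux_subset col _ _ h.1).resolve_left h.2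
    by_cases htop : ∃ᶠ n in atTop, π n ∈ col (2 * (i + 1))
    · exact parityCondition_of_frequently_mem_col hdisj hi hlow htop
    · obtain ⟨acc', hin', hσ'⟩ :=
        exists_eventually_parityStrategy hE hfair hin hσ (not_frequently.1 htop)
      exact ih (by omega) hin' hσ'

end LiveGameGraph

/-! ### Round robin on live edges -/

namespace LiveGameGraph

variable {V : Type*}

def hist (π : ℕ → V) (n : ℕ) : List V := List.ofFn fun j : Fin n => π j

theorem length_hist (π : ℕ → V) (n : ℕ) : (hist π n).length = n := List.length_ofFn

theorem hist_getElem?_eq_some {π : ℕ → V} {n j : ℕ} {u : V} :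
    (hist π n)[j]? = some u ↔ j < n ∧ π j = u := by
  simp [hist, List.getElem?_ofFn]

noncomputable def taken (h : List V) (v w : V) : ℕ :=
  Nat.count (fun j => h[j]? = some v ∧ h[j + 1]? = some w) h.length

theorem taken_hist_le (π : ℕ → V) (n : ℕ) (v w : V) :
    taken (hist π n) v w ≤ Nat.count (fun j => π j = v ∧ π (j + 1) = w) n := by
  rw [taken, length_hist]
  exact Nat.count_mono_left fun j _ hj =>
    ⟨(hist_getElem?_eq_some.1 hj.1).2, (hist_getElem?_eq_some.1 hj.2).2⟩

theorem count_le_taken_hist (π : ℕ → V) (n : ℕ) (v w : V) :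
    Nat.count (fun j => π j = v ∧ π (j + 1) = w) n ≤ taken (hist π (n + 1)) v w := by
  rw [taken, length_hist]
  refine (Nat.count_mono_left fun j hj hP => ?_).trans (Nat.count_monotone _ n.le_succ)
  exact ⟨hist_getElem?_eq_some.2 ⟨by omega, hP.1⟩,
    hist_getElem?_eq_some.2 ⟨by omega, hP.2⟩⟩

variable [Finite V] (Gm : LiveGameGraph V)

noncomputable def leastTaken (h : List V) (v : V) : V :=
  if hne : ∃ w, Gm.El v w then
    (Set.exists_min_image {w | Gm.El v w} (taken h v) (Set.toFinite _) hne).choose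
  else Gm.pick v Set.univ

theorem El_leastTaken {h : List V} {v : V} (hne : ∃ w, Gm.El v w) :
    Gm.El v (Gm.leastTaken h v) := by
  rw [leastTaken, dif_pos hne]
  exact (Set.exists_min_image _ _ (Set.toFinite _) hne).choose_spec.1

theorem leastTaken_le {h : List V} {v w : V} (hw : Gm.El v w) :
    taken h v (Gm.leastTaken h v) ≤ taken h v w := by
  rw [leastTaken, dif_pos ⟨w, hw⟩]
  exact (Set.exists_min_image _ _ (Set.toFinite _) ⟨w, hw⟩).choose_spec.2 w hw

theorem E_leastTaken (h : List V) (v : V) : Gm.E v (Gm.leastTaken h v) := by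
  by_cases hne : ∃ w, Gm.El v w
  · exact (Gm.live_sub v _ (Gm.El_leastTaken hne)).2
  · rw [leastTaken, dif_neg hne]
    exact Gm.E_pick v _

variable {Gm}

/-- If `(v, w)` were taken finitely often, a live edge `(v, w')` chosen infinitely often would
eventually have been taken more often than `(v, w)`, contradicting the least-taken choice. -/
theorem frequently_of_frequently_leastTaken {π : ℕ → V} {v w : V} (hw : Gm.El v w)
    (h : ∃ᶠ n in atTop, π n = v ∧ π (n + 1) = Gm.leastTaken (hist π n) v) :
    ∃ᶠ n in atTop, π n = v ∧ π (n + 1) = w := by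
  by_contra hfin
  rw [Nat.frequently_atTop_iff_infinite, Set.not_infinite] at hfin
  set B := hfin.toFinset.card
  obtain ⟨w', hw'⟩ := frequently_exists.1
    (h.mono fun n hn => (⟨π (n + 1), hn, rfl⟩ : ∃ w', (π n = v ∧
      π (n + 1) = Gm.leastTaken (hist π n) v) ∧ π (n + 1) = w'))
  have hinf : {j | π j = v ∧ π (j + 1) = w'}.Infinite :=
    Nat.frequently_atTop_iff_infinite.1 (hw'.mono fun n hn => ⟨hn.1.1, hn.2⟩)
  set M := Nat.nth (fun j => π j = v ∧ π (j + 1) = w') B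
  obtain ⟨n, hn, ⟨hnv, hnext⟩, hw'n⟩ := frequently_atTop.1 hw' (M + 2)
  obtain ⟨n, rfl⟩ : ∃ n', n = n' + 1 := ⟨n - 1, by omega⟩
  have hmany : B + 1 ≤ taken (hist π (n + 1)) v w' :=
    calc B + 1 = Nat.count (fun j => π j = v ∧ π (j + 1) = w') (M + 1) :=
          (Nat.count_nth_succ_of_infinite hinf B).symm
      _ ≤ Nat.count (fun j => π j = v ∧ π (j + 1) = w') n := Nat.count_monotone _ (by omega)
      _ ≤ taken (hist π (n + 1)) v w' := count_le_taken_hist π n v w'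
  have hfew : taken (hist π (n + 1)) v w' ≤ B :=
    calc taken (hist π (n + 1)) v w' ≤ taken (hist π (n + 1)) v w :=
          hw'n ▸ hnext ▸ Gm.leastTaken_le hw
      _ ≤ Nat.count (fun j => π j = v ∧ π (j + 1) = w) (n + 1) := taken_hist_le π _ v w
      _ ≤ B := Nat.count_le_card hfin _
  omega

end LiveGameGraph

namespace LiveGameGraph

variable {V : Type*} (col : ℕ → Set V)

def Suspected (i : ℕ) (h : List V) (v : V) : Prop :=
  ∃ j : ℕ, ∃ u ∉ lowColors col i, h[j]? = some u ∧
    ∀ j' : ℕ, j < j' → h[j']? ≠ some v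

variable {col}

theorem frequently_suspected {i : ℕ} {π : ℕ → V} {v : V} (hv : ∃ᶠ n in atTop, π n = v)
    (hhigh : ∃ᶠ n in atTop, π n ∉ lowColors col i) :
    ∃ᶠ n in atTop, π n = v ∧ Suspected col i (hist π n) v := by
  refine frequently_atTop.2 fun N => ?_
  obtain ⟨g, hg, hgh⟩ := frequently_atTop.1 hhigh N
  have hnext : ∃ n, g < n ∧ π n = v :=
    (frequently_atTop.1 hv (g + 1)).imp fun n hn => ⟨by omega, hn.2⟩
  have hmin := fun m => Nat.find_min (m := m) hnext
  refine ⟨Nat.find hnext, by have := (Nat.find_spec hnext).1; omega, (Nat.find_spec hnext).2,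
    g, π g, hgh, hist_getElem?_eq_some.2 ⟨(Nat.find_spec hnext).1, rfl⟩, fun j hj hjv => ?_⟩
  obtain ⟨hjn, hjv⟩ := hist_getElem?_eq_some.1 hjv
  exact hmin j hjn ⟨hj, hjv⟩

theorem eventually_not_suspected [Finite V] {i : ℕ} {π : ℕ → V}
    (hlow : ∀ᶠ n in atTop, π n ∈ lowColors col i) :
    ∀ᶠ n in atTop, ¬ Suspected col i (hist π n) (π n) := by
  obtain ⟨L, hL⟩ := eventually_atTop.1 hlow
  have hseen : ∀ᶠ n in atTop, ∀ v, π n = v → ∃ j, L ≤ j ∧ j < n ∧ π j = v := by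
    refine eventually_all.2 fun v => ?_
    by_cases h : ∃ j, L ≤ j ∧ π j = v
    · obtain ⟨j, hLj, hj⟩ := h
      exact eventually_atTop.2 ⟨j + 1, fun n hn _ => ⟨j, hLj, by omega, hj⟩⟩
    · exact eventually_atTop.2 ⟨L, fun n hn hnv => absurd ⟨n, hn, hnv⟩ h⟩
  filter_upwards [hseen] with n hn
  rintro ⟨g, u, hu, hgu, hlast⟩
  obtain ⟨hgn, rfl⟩ := hist_getElem?_eq_some.1 hgu
  obtain ⟨j, hLj, hjn, hj⟩ := hn (π n) rfl
  have hgL : g < L := by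
    by_contra hge
    exact hu (hL g (by omega))
  exact hlast j (by omega) (hist_getElem?_eq_some.2 ⟨hjn, hj⟩)

end LiveGameGraph

/-! ### Player 1 wins outside the fixpoint -/

namespace LiveGameGraph

variable {V : Type*} (Gm : LiveGameGraph V) (col : ℕ → Set V)

def nuStage (i : ℕ) (acc : Set V) (m : ℕ) : Set V :=
  (fun Y => lfpSet fun X => Gm.parityAux col i (acc ∪ Gm.parityTerm col (i + 1) Y X))^[m]
    Set.univ

def nuAcc (i : ℕ) (acc : Set V) (m : ℕ) : Set V :=
  acc ∪ Gm.parityTerm col (i + 1) (Gm.nuStage col i acc m) (Gm.nuStage col i acc (m + 1))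

/-- For `v` outside the fixpoint, `v ∈ nuStage (nuRank v) \ nuStage (nuRank v + 1)`. -/
noncomputable def nuRank (i : ℕ) (acc : Set V) (v : V) : ℕ :=
  sInf {m | v ∉ Gm.nuStage col i acc (m + 1)}

variable {Gm col}

theorem nuStage_succ (i : ℕ) (acc : Set V) (m : ℕ) :
    Gm.nuStage col i acc (m + 1) = Gm.parityAux col i (Gm.nuAcc col i acc m) := by
  have h : Gm.nuStage col i acc (m + 1) = lfpSet fun X =>
      Gm.parityAux col i (acc ∪ Gm.parityTerm col (i + 1) (Gm.nuStage col i acc m) X) :=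
    Function.iterate_succ_apply' _ m _
  rw [nuAcc, h]
  exact (lfpSet_fixed (Gm.parityAux_inner_mono col i acc _)).symm

theorem nuStage_anti (i : ℕ) (acc : Set V) : Antitone (Gm.nuStage col i acc) :=
  Monotone.antitone_iterate_of_map_le (Gm.parityAux_outer_mono col i acc) (Set.subset_univ _)

theorem parityAux_subset_nuStage (i : ℕ) (acc : Set V) (m : ℕ) :
    Gm.parityAux col (i + 1) acc ⊆ Gm.nuStage col i acc m :=
  gfpSet_subset_iterate_univ (Gm.parityAux_outer_mono col i acc) m

theorem notMem_nuStage_nuRank [Finite V] {i : ℕ} {acc : Set V} {v : V}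
    (hv : v ∉ Gm.parityAux col (i + 1) acc) :
    v ∉ Gm.nuStage col i acc (Gm.nuRank col i acc v + 1) := by
  refine Nat.sInf_mem (s := {m | v ∉ Gm.nuStage col i acc (m + 1)}) ?_
  obtain ⟨n, hn⟩ := exists_iterate_univ_eq_gfpSet (Gm.parityAux_outer_mono col i acc)
  have hvn : v ∉ Gm.nuStage col i acc n := by rw [nuStage, hn]; exact hv
  cases n with
  | zero => exact absurd (Set.mem_univ v) hvn
  | succ n => exact ⟨n, hvn⟩

theorem mem_nuStage_nuRank (i : ℕ) (acc : Set V) (v : V) :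
    v ∈ Gm.nuStage col i acc (Gm.nuRank col i acc v) := by
  rcases h : Gm.nuRank col i acc v with _ | m
  · exact Set.mem_univ v
  · by_contra hv
    have : Gm.nuRank col i acc v ≤ m := Nat.sInf_le hv
    omega

theorem nuRank_le {i m : ℕ} {acc : Set V} {v : V} (h : v ∉ Gm.nuStage col i acc (m + 1)) :
    Gm.nuRank col i acc v ≤ m :=
  Nat.sInf_le h

theorem nuRank_lt {i m : ℕ} {acc : Set V} {v : V} (h : v ∉ Gm.nuStage col i acc m) :
    Gm.nuRank col i acc v < m := by
  cases m with
  | zero => exact absurd (Set.mem_univ v) h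
  | succ m => exact Nat.lt_succ_of_le (nuRank_le h)

section OutsideFixpoint

variable [Finite V] {i : ℕ} {acc : Set V} {v : V} (hv : v ∉ Gm.parityAux col (i + 1) acc)
include hv

theorem notMem_parityAux_nuAcc :
    v ∉ Gm.parityAux col i (Gm.nuAcc col i acc (Gm.nuRank col i acc v)) :=
  nuStage_succ (Gm := Gm) i acc _ ▸ notMem_nuStage_nuRank hv

theorem notMem_parityTerm_nuStage : v ∉ Gm.parityTerm col (i + 1)
    (Gm.nuStage col i acc (Gm.nuRank col i acc v))
    (Gm.nuStage col i acc (Gm.nuRank col i acc v + 1)) := fun h =>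
  notMem_parityAux_nuAcc hv (Gm.subset_parityAux col i _ (Or.inr h))

theorem notMem_cpre_nuStage_of_mem_col (htop : v ∈ col (2 * (i + 1))) :
    v ∉ Gm.cpre (Gm.nuStage col i acc (Gm.nuRank col i acc v)) := fun h =>
  notMem_parityTerm_nuStage hv (Or.inl ⟨htop, h⟩)

theorem notMem_apre_nuStage (hodd : v ∈ lowColors col i ∪ col (2 * i + 1)) :
    v ∉ Gm.apre (Gm.nuStage col i acc (Gm.nuRank col i acc v))
      (Gm.nuStage col i acc (Gm.nuRank col i acc v + 1)) := fun h =>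
  notMem_parityTerm_nuStage hv (Or.inr ⟨(biUnion_col_odd_eq col i).symm ▸ hodd, h⟩)

theorem notMem_cpre_nuStage_succ (hlow : v ∈ lowColors col (i + 1)) :
    v ∉ Gm.cpre (Gm.nuStage col i acc (Gm.nuRank col i acc v + 1)) := by
  by_cases htop : v ∈ col (2 * (i + 1))
  · exact fun h => notMem_cpre_nuStage_of_mem_col hv htop
      (Gm.cpre_mono (nuStage_anti i acc (Nat.le_succ _)) h)
  · exact fun h => notMem_apre_nuStage hv (mem_lowColors_or_of_notMem_col col hlow htop)
      (Gm.cpre_subset_apre h)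

end OutsideFixpoint

end LiveGameGraph

namespace LiveGameGraph

variable {V : Type*} [Finite V] (Gm : LiveGameGraph V) (col : ℕ → Set V)

/-- Outside the fixpoint, `v ∉ Apre Y X` for the ν-stages `Y ⊇ X` around the rank of `v`: if a
live edge enters `X`, some move leaves `Y`; otherwise every live edge leaves `X`, so round robin
keeps the rank. -/
noncomputable def spoilStrategy : ℕ → Set V → List V → V → V
  | 0, _, _, v => Gm.pick v Set.univ
  | i + 1, acc, h, v =>
    if v ∈ col (2 * (i + 1)) then Gm.pick v (Gm.nuStage col i acc (Gm.nuRank col i acc v))ᶜ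
    else if v ∈ lowColors col i ∧ ¬ Suspected col i h v then
      spoilStrategy i (Gm.nuAcc col i acc (Gm.nuRank col i acc v)) h v
    else if v ∈ Gm.lpre (Gm.nuStage col i acc (Gm.nuRank col i acc v + 1)) then
      Gm.pick v (Gm.nuStage col i acc (Gm.nuRank col i acc v))ᶜ
    else if ∃ w, Gm.El v w then Gm.leastTaken h v
    else Gm.pick v (Gm.nuStage col i acc (Gm.nuRank col i acc v + 1))ᶜ

variable {Gm col}

theorem E_spoilStrategy (i : ℕ) (acc : Set V) (h : List V) (v : V) :
    Gm.E v (Gm.spoilStrategy col i acc h v) := by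
  induction i generalizing acc with
  | zero => exact Gm.E_pick v _
  | succ i ih =>
    simp only [spoilStrategy]
    split_ifs
    exacts [Gm.E_pick v _, ih _, Gm.E_pick v _, Gm.E_leastTaken h v, Gm.E_pick v _]

section OutsideFixpoint

variable {i : ℕ} {acc : Set V} {h : List V} {v : V}

theorem spoilStrategy_succ_of_inner (htop : v ∉ col (2 * (i + 1)))
    (hin : v ∈ lowColors col i ∧ ¬ Suspected col i h v) :
    Gm.spoilStrategy col (i + 1) acc h v =
      Gm.spoilStrategy col i (Gm.nuAcc col i acc (Gm.nuRank col i acc v)) h v := by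
  simp only [spoilStrategy, if_neg htop, if_pos hin]

variable (hv : v ∉ Gm.parityAux col (i + 1) acc) (hv1 : v ∈ Gm.V1)
include hv hv1

theorem spoilStrategy_succ_of_mem_col (htop : v ∈ col (2 * (i + 1))) :
    Gm.spoilStrategy col (i + 1) acc h v ∉ Gm.nuStage col i acc (Gm.nuRank col i acc v) := by
  simp only [spoilStrategy, if_pos htop]
  exact Gm.pick_mem (Gm.exists_notMem_of_notMem_cpre hv1 (notMem_cpre_nuStage_of_mem_col hv htop))

theorem spoilStrategy_succ_of_outer (hlow : v ∈ lowColors col (i + 1))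
    (htop : v ∉ col (2 * (i + 1)))
    (hout : ¬ (v ∈ lowColors col i ∧ ¬ Suspected col i h v)) :
    Gm.spoilStrategy col (i + 1) acc h v ∉ Gm.nuStage col i acc (Gm.nuRank col i acc v) ∨
      Gm.spoilStrategy col (i + 1) acc h v ∉ Gm.nuStage col i acc (Gm.nuRank col i acc v + 1) ∧
      ((∃ u, Gm.El v u) → Gm.spoilStrategy col (i + 1) acc h v = Gm.leastTaken h v) := by
  have hapre := notMem_apre_nuStage hv (mem_lowColors_or_of_notMem_col col hlow htop)
  simp only [spoilStrategy, if_neg htop, if_neg hout]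
  split_ifs with hl hne
  · refine Or.inl (Gm.pick_mem (S := (Gm.nuStage col i acc _)ᶜ) ?_)
    by_contra! hall
    exact hapre (Or.inr ⟨hl, hv1, fun w hw => not_not.1 (hall w hw)⟩)
  · exact Or.inr ⟨fun hX => hl ⟨_, Gm.El_leastTaken hne, hX⟩, fun _ => rfl⟩
  · exact Or.inr ⟨Gm.pick_mem (Gm.exists_notMem_of_notMem_cpre hv1
      fun hc => hapre (Gm.cpre_subset_apre hc)), fun hne' => absurd hne' hne⟩

theorem spoilStrategy_succ_notMem_nuStage (hlow : v ∈ lowColors col (i + 1))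
    (hinner : v ∈ lowColors col i →
      Gm.spoilStrategy col i (Gm.nuAcc col i acc (Gm.nuRank col i acc v)) h v ∉
        Gm.parityAux col i (Gm.nuAcc col i acc (Gm.nuRank col i acc v))) :
    Gm.spoilStrategy col (i + 1) acc h v ∉ Gm.nuStage col i acc (Gm.nuRank col i acc v + 1) := by
  have hanti := nuStage_anti (Gm := Gm) (col := col) i acc (Nat.le_succ (Gm.nuRank col i acc v))
  by_cases htop : v ∈ col (2 * (i + 1))
  · exact fun hw => spoilStrategy_succ_of_mem_col hv hv1 htop (hanti hw)
  by_cases hin : v ∈ lowColors col i ∧ ¬ Suspected col i h v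
  · rw [spoilStrategy_succ_of_inner htop hin, nuStage_succ]
    exact hinner hin.1
  · rcases spoilStrategy_succ_of_outer hv hv1 hlow htop hin with hY | hX
    exacts [fun hw => hY (hanti hw), hX.1]

end OutsideFixpoint

theorem spoilStrategy_notMem {i : ℕ} {acc : Set V} {h : List V} {v : V} (hv1 : v ∈ Gm.V1)
    (hv : v ∉ Gm.parityAux col i acc) (hlow : v ∈ lowColors col i) :
    Gm.spoilStrategy col i acc h v ∉ Gm.parityAux col i acc := by
  induction i generalizing acc with
  | zero => exact absurd hlow (lowColors_zero col ▸ Set.notMem_empty v)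
  | succ i ih =>
    exact fun hw => spoilStrategy_succ_notMem_nuStage hv hv1 hlow
      (fun hl => ih (notMem_parityAux_nuAcc hv) hl) (parityAux_subset_nuStage i acc _ hw)

theorem spoilStrategy_step {i : ℕ} {acc : Set V} {h : List V} {v w : V}
    (hv : v ∉ Gm.parityAux col i acc) (hlow : v ∈ lowColors col i) (hE : Gm.E v w)
    (hw : v ∈ Gm.V1 → w = Gm.spoilStrategy col i acc h v) : w ∉ Gm.parityAux col i acc := by
  rcases Gm.mem_V0_or_V1 v with hv0 | hv1
  · exact fun hw' => hv (Gm.lowColors_inter_cpre_subset col i acc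
      ⟨hlow, (Gm.mem_cpre_of_V0 hv0).2 ⟨w, hE, hw'⟩⟩)
  · exact hw hv1 ▸ spoilStrategy_notMem hv1 hv hlow

theorem spoilStrategy_step_nuStage {i : ℕ} {acc : Set V} {h : List V} {v w : V}
    (hv : v ∉ Gm.parityAux col (i + 1) acc) (hlow : v ∈ lowColors col (i + 1)) (hE : Gm.E v w)
    (hw : v ∈ Gm.V1 → w = Gm.spoilStrategy col (i + 1) acc h v) :
    w ∉ Gm.nuStage col i acc (Gm.nuRank col i acc v + 1) ∧
      (v ∈ col (2 * (i + 1)) → w ∉ Gm.nuStage col i acc (Gm.nuRank col i acc v)) := by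
  rcases Gm.mem_V0_or_V1 v with hv0 | hv1
  · exact ⟨fun hw' => notMem_cpre_nuStage_succ hv hlow
        ((Gm.mem_cpre_of_V0 hv0).2 ⟨w, hE, hw'⟩),
      fun htop hw' => notMem_cpre_nuStage_of_mem_col hv htop
        ((Gm.mem_cpre_of_V0 hv0).2 ⟨w, hE, hw'⟩)⟩
  · rw [hw hv1]
    exact ⟨spoilStrategy_succ_notMem_nuStage hv hv1 hlow
      (fun hl => spoilStrategy_notMem hv1 (notMem_parityAux_nuAcc hv) hl),
      spoilStrategy_succ_of_mem_col hv hv1⟩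

section PlayerOne

variable {i : ℕ} {acc : Set V} {π : ℕ → V} (hE : ∀ n, Gm.E (π n) (π (n + 1)))
  (hin : ∀ᶠ n in atTop, π n ∉ Gm.parityAux col (i + 1) acc)
  (hσ : ∀ᶠ n in atTop, π n ∈ Gm.V1 →
    π (n + 1) = Gm.spoilStrategy col (i + 1) acc (hist π n) (π n))
  (hlow : ∀ᶠ n in atTop, π n ∈ lowColors col (i + 1))
include hE hin hσ hlow

theorem exists_eventually_nuRank_eq : ∃ m, ∀ᶠ n in atTop, Gm.nuRank col i acc (π n) = m := by
  refine exists_eventually_eq_of_eventually_succ_le ?_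
  filter_upwards [hin, hσ, hlow] with n hn hσn hln
  exact nuRank_le (spoilStrategy_step_nuStage hn hln (hE n) hσn).1

variable {m : ℕ} (hm : ∀ᶠ n in atTop, Gm.nuRank col i acc (π n) = m)
include hm

theorem eventually_notMem_col_top : ∀ᶠ n in atTop, π n ∉ col (2 * (i + 1)) := by
  filter_upwards [hin, hσ, hlow, hm, (tendsto_add_atTop_nat 1).eventually hm]
    with n hn hσn hln hmn hmn' htop
  have hlt := nuRank_lt ((spoilStrategy_step_nuStage hn hln (hE n) hσn).2 htop)
  omega

/-- Every recurring vertex is then infinitely often `Suspected`, and at those visits the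
constant ν-rank leaves Player 1 only the round-robin move. -/
theorem stronglyFair_of_frequently_notMem_lowColors
    (hhigh : ∃ᶠ n in atTop, π n ∉ lowColors col i) : Gm.StronglyFair π := by
  refine Gm.stronglyFair_iff.2 fun v u hl hfreq => frequently_of_frequently_leastTaken hl ?_
  have hv1 := (Gm.live_sub v u hl).1
  have hout : ∃ᶠ n in atTop,
      π n = v ∧ ¬ (π n ∈ lowColors col i ∧ ¬ Suspected col i (hist π n) (π n)) := by
    by_cases hvl : v ∈ lowColors col i
    · exact (frequently_suspected hfreq hhigh).mono fun n hn =>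
        ⟨hn.1, fun h => h.2 (hn.1 ▸ hn.2)⟩
    · exact hfreq.mono fun n hn => ⟨hn, fun h => hvl (hn ▸ h.1)⟩
  refine (hout.and_eventually ((hin.and hσ).and ((hlow.and
    (eventually_notMem_col_top hE hin hσ hlow hm)).and
    (hm.and ((tendsto_add_atTop_nat 1).eventually hm))))).mono ?_
  rintro n ⟨⟨rfl, hn⟩, ⟨hZ, hσn⟩, ⟨hln, htop⟩, hmn, hmn'⟩
  rcases spoilStrategy_succ_of_outer hZ hv1 hln htop hn with hY | hX
  · refine absurd ?_ hY
    rw [← hσn hv1, hmn, ← hmn']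
    exact mem_nuStage_nuRank i acc _
  · exact ⟨rfl, (hσn hv1).trans (hX.2 ⟨u, hl⟩)⟩

theorem not_parityCondition_of_frequently_notMem_lowColors {k : ℕ}
    (hdisj : ColorsDisjoint col k) (hik : i + 1 ≤ k)
    (hhigh : ∃ᶠ n in atTop, π n ∉ lowColors col i) : ¬ parityCondition col k π := by
  have htop := eventually_notMem_col_top hE hin hσ hlow hm
  refine not_parityCondition_of_frequently_mem_col hdisj (Finset.mem_Icc.2 ⟨by omega, hik⟩)
    hlow ?_ htop
  refine (hhigh.and_eventually (hlow.and htop)).mono fun n ⟨hh, hln, ht⟩ => ?_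
  rw [show 2 * (i + 1) - 1 = 2 * i + 1 by omega]
  exact (mem_lowColors_or_of_notMem_col col hln ht).resolve_left hh

theorem exists_eventually_spoilStrategy (hlow' : ∀ᶠ n in atTop, π n ∈ lowColors col i) :
    ∃ acc', (∀ᶠ n in atTop, π n ∉ Gm.parityAux col i acc') ∧
      ∀ᶠ n in atTop, π n ∈ Gm.V1 →
        π (n + 1) = Gm.spoilStrategy col i acc' (hist π n) (π n) := by
  refine ⟨Gm.nuAcc col i acc m, ?_, ?_⟩
  · filter_upwards [hin, hm] with n hn hmn
    exact hmn ▸ notMem_parityAux_nuAcc hn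
  · filter_upwards [hσ, hm, hlow', eventually_not_suspected hlow',
      eventually_notMem_col_top hE hin hσ hlow hm] with n hσn hmn hln hns htop hv1
    rw [hσn hv1, spoilStrategy_succ_of_inner htop ⟨hln, hns⟩, hmn]

end PlayerOne

theorem spoilStrategy_spoils {k : ℕ} (hdisj : ColorsDisjoint col k) {i : ℕ} (hi : i ≤ k)
    {acc : Set V} {π : ℕ → V} (hE : ∀ n, Gm.E (π n) (π (n + 1)))
    (hin : ∀ᶠ n in atTop, π n ∉ Gm.parityAux col i acc)
    (hσ : ∀ᶠ n in atTop, π n ∈ Gm.V1 →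
      π (n + 1) = Gm.spoilStrategy col i acc (hist π n) (π n))
    (hlow : ∀ᶠ n in atTop, π n ∈ lowColors col i) :
    Gm.StronglyFair π ∧ ¬ parityCondition col k π := by
  induction i generalizing acc with
  | zero => exact hlow.exists.elim fun n h => absurd h (lowColors_zero col ▸ Set.notMem_empty _)
  | succ i ih =>
    obtain ⟨m, hm⟩ := exists_eventually_nuRank_eq hE hin hσ hlow
    by_cases hhigh : ∃ᶠ n in atTop, π n ∉ lowColors col i
    · exact ⟨stronglyFair_of_frequently_notMem_lowColors hE hin hσ hlow hm hhigh,
        not_parityCondition_of_frequently_notMem_lowColors hE hin hσ hlow hm hdisj hi hhigh⟩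
    · have hlow' : ∀ᶠ n in atTop, π n ∈ lowColors col i := by
        simpa only [not_not] using not_frequently.1 hhigh
      obtain ⟨acc', hin', hσ'⟩ := exists_eventually_spoilStrategy hE hin hσ hlow hm hlow'
      exact ih (by omega) hin' hσ' hlow'

end LiveGameGraph

namespace LiveGameGraph

variable {V : Type*} {Gm : LiveGameGraph V}

variable (Gm) in
theorem exists_compliant (ρ0 ρ1 : List V → V → V) (v0 : V) :
    ∃ π, Gm.Compliant ρ0 ρ1 v0 π := by
  let next : List V × V → List V × V := fun p =>
    (p.1 ++ [p.2], if p.2 ∈ Gm.V0 then ρ0 p.1 p.2 else ρ1 p.1 p.2)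
  let π n := (next^[n] ([], v0)).2
  have hhist : ∀ n, (next^[n] ([], v0)).1 = hist π n := by
    intro n
    induction n with
    | zero => rfl
    | succ n ih =>
      rw [Function.iterate_succ_apply', hist, List.ofFn_succ', List.concat_eq_append]
      exact congrArg (· ++ [π n]) ih
  refine ⟨π, rfl, fun n => ⟨fun h0 => ?_, fun h1 => ?_⟩⟩
  · change (next^[n + 1] ([], v0)).2 = _
    rw [Function.iterate_succ_apply']
    simp only [next, hhist]
    exact if_pos h0
  · change (next^[n + 1] ([], v0)).2 = _
    rw [Function.iterate_succ_apply']
    simp only [next, hhist]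
    exact if_neg (Gm.notMem_V0 h1)

theorem E_of_compliant {ρ0 ρ1 : List V → V → V} {v0 : V} {π : ℕ → V}
    (h0 : Gm.Strategy0 ρ0) (h1 : Gm.Strategy1 ρ1) (hπ : Gm.Compliant ρ0 ρ1 v0 π) (n : ℕ) :
    Gm.E (π n) (π (n + 1)) := by
  rcases Gm.mem_V0_or_V1 (π n) with hv | hv
  · exact (hπ.2 n).1 hv ▸ h0 _ _ hv
  · exact (hπ.2 n).2 hv ▸ h1 _ _ hv

variable [Finite V] {col : ℕ → Set V} {k : ℕ}

theorem winsFrom_parityStrategy (hdisj : ColorsDisjoint col k) {v0 : V}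
    (hv0 : v0 ∈ Gm.parityZ col k) :
    Gm.WinsFrom (parityCondition col k) (fun _ v => Gm.parityStrategy col k ∅ v) v0 := by
  have hσ : Gm.Strategy0 fun _ v => Gm.parityStrategy col k ∅ v :=
    fun _ v _ => Gm.E_parityStrategy k ∅ v
  refine ⟨hσ, fun ρ1 hρ1 π hπ hfair => ?_⟩
  have hE := E_of_compliant hσ hρ1 hπ
  have hin : ∀ n, π n ∈ Gm.parityZ col k := by
    intro n
    induction n with
    | zero => exact hπ.1 ▸ hv0
    | succ n ih => exact Gm.parityStrategy_step ih (Set.notMem_empty _) (hE n) (hπ.2 n).1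
  exact parityCondition_of_parityStrategy hdisj le_rfl hE hfair
    (Eventually.of_forall fun n => ⟨hin n, Set.notMem_empty _⟩)
    (Eventually.of_forall fun n => (hπ.2 n).1)

theorem winningRegion_subset_parityZ (hcover : lowColors col k = Set.univ)
    (hdisj : ColorsDisjoint col k) :
    Gm.WinningRegion (parityCondition col k) ⊆ Gm.parityZ col k := by
  rintro v0 ⟨ρ0, hρ0, hwin⟩
  by_contra hv0
  have hρ1 : Gm.Strategy1 fun h v => Gm.spoilStrategy col k ∅ h v :=
    fun h v _ => E_spoilStrategy k ∅ h v
  obtain ⟨π, hπ⟩ := Gm.exists_compliant ρ0 (fun h v => Gm.spoilStrategy col k ∅ h v) v0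
  have hE := E_of_compliant hρ0 hρ1 hπ
  have hlow : ∀ n, π n ∈ lowColors col k := fun n => hcover ▸ Set.mem_univ _
  have hout : ∀ n, π n ∉ Gm.parityZ col k := by
    intro n
    induction n with
    | zero => exact hπ.1 ▸ hv0
    | succ n ih => exact spoilStrategy_step ih (hlow n) (hE n) (hπ.2 n).2
  obtain ⟨hfair, hlose⟩ := spoilStrategy_spoils hdisj le_rfl hE (Eventually.of_forall hout)
    (Eventually.of_forall fun n => (hπ.2 n).2) (Eventually.of_forall hlow)
  exact hlose (hwin _ hρ1 π hπ hfair)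

end LiveGameGraph

/-- the parity fixpoint equals the winning region of Player 0 in
the fair adversarial parity game (maximal color visited infinitely often is
even), and a memoryless winning Player-0 strategy exists on it. -/
theorem fair_adversarial_parity {V : Type*} [Fintype V]
    (Gm : LiveGameGraph V) (k : ℕ) (col : ℕ → Set V)
    (hcover : (⋃ i ∈ Finset.Icc 1 (2 * k), col i) = Set.univ)
    (hdisj : ∀ i ∈ Finset.Icc 1 (2 * k), ∀ j ∈ Finset.Icc 1 (2 * k),
      i ≠ j → col i ∩ col j = ∅)
    (Zstar : Set V) (hZ : Zstar = Gm.parityZ col k) :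
    Zstar = Gm.WinningRegion
        (fun π => ∀ i ∈ Finset.Icc 1 k,
          (∀ N, ∃ n ≥ N, π n ∈ col (2 * i - 1)) →
          ∃ j ∈ Finset.Icc i k, ∀ N, ∃ n ≥ N, π n ∈ col (2 * j)) ∧
    ∃ σ : V → V, (∀ v ∈ Gm.V0, Gm.E v (σ v)) ∧
      ∀ v0 ∈ Zstar,
        Gm.WinsFrom
          (fun π => ∀ i ∈ Finset.Icc 1 k,
            (∀ N, ∃ n ≥ N, π n ∈ col (2 * i - 1)) →
            ∃ j ∈ Finset.Icc i k, ∀ N, ∃ n ≥ N, π n ∈ col (2 * j))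
          (fun _ v => σ v) v0 := by
  subst hZ
  simp only [ge_iff_le, ← frequently_atTop]
  refine ⟨Set.Subset.antisymm (fun v0 hv0 => ⟨_, Gm.winsFrom_parityStrategy hdisj hv0⟩)
      (Gm.winningRegion_subset_parityZ hcover hdisj),
    Gm.parityStrategy col k ∅, fun v _ => Gm.E_parityStrategy k ∅ v,
    fun v0 hv0 => Gm.winsFrom_parityStrategy hdisj hv0⟩
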